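/- arXiv:1904.13169 — 9 statements merged into one kernel-verified Lean document; each statement's English description precedes it below -/
import Mathlib

section
/- Let n ≥ 1 and let A be an n×n real matrix. Then for all indices i, j ∈ {1,…,n}, the (i,j)-entry of the tropical product A ⊙ adj(A) equals per(A_r(i ⇒ j)), where A_r(i ⇒ j) denotes the matrix obtained from A by replacing its j-th row by its i-th row. That is, max_{1≤k≤n} ( A_{ik} + per(A(j|k)) ) = per(A_r(i ⇒ j)). -/
open Matrix

/-- Tropical (max-plus) permanent of a square real matrix:
`per(A) = max over permutations σ of ∑ i, A i (σ i)`. -/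
noncomputable def tperm {p : ℕ} (A : Matrix (Fin p) (Fin p) ℝ) : ℝ :=
  Finset.univ.sup' ⟨1, Finset.mem_univ 1⟩
    (fun σ : Equiv.Perm (Fin p) => ∑ i, A i (σ i))

/-- `del A i j` is the matrix obtained from `A` by deleting row `i` and column `j`. -/
def del {p : ℕ} (A : Matrix (Fin (p+1)) (Fin (p+1)) ℝ) (i j : Fin (p+1)) :
    Matrix (Fin p) (Fin p) ℝ :=
  A.submatrix i.succAbove j.succAbove

/-- Tropical (max-plus) matrix product: `(P ⊙ Q) i j = max_k (P i k + Q k j)`. -/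
noncomputable def tmul {l m n : ℕ} (P : Matrix (Fin l) (Fin (m+1)) ℝ)
    (Q : Matrix (Fin (m+1)) (Fin n) ℝ) : Matrix (Fin l) (Fin n) ℝ :=
  fun i j => Finset.univ.sup' ⟨0, Finset.mem_univ 0⟩ (fun k => P i k + Q k j)

/-- Tropical (max-plus) matrix-vector product: `(P ⊙ x) i = max_k (P i k + x k)`. -/
noncomputable def tmulVec {l m : ℕ} (P : Matrix (Fin l) (Fin (m+1)) ℝ)
    (x : Fin (m+1) → ℝ) : Fin l → ℝ :=
  fun i => Finset.univ.sup' ⟨0, Finset.mem_univ 0⟩ (fun k => P i k + x k)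

/-- The ε-adjoint: `adj(A)_{ij} = per(A(j|i))`. -/
noncomputable def tadj {p : ℕ} (A : Matrix (Fin (p+1)) (Fin (p+1)) ℝ) :
    Matrix (Fin (p+1)) (Fin (p+1)) ℝ :=
  fun i j => tperm (del A j i)

/-- The pseudo-inverse: `A⁻_{ij} = per(A(j|i)) - per(A)`. -/
noncomputable def pinv {p : ℕ} (A : Matrix (Fin (p+1)) (Fin (p+1)) ℝ) :
    Matrix (Fin (p+1)) (Fin (p+1)) ℝ :=
  fun i j => tperm (del A j i) - tperm A

/-- Build a permutation of `Fin (n+1)` from `k` and a permutation of `Fin n`,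
sending `j ↦ k` and `j.succAbove m ↦ k.succAbove (τ m)`. -/
noncomputable def mkPerm {n : ℕ} (j k : Fin (n+1)) (τ : Equiv.Perm (Fin n)) :
    Equiv.Perm (Fin (n+1)) :=
  (finSuccEquiv' j).trans (τ.optionCongr.trans (finSuccEquiv' k).symm)

lemma mkPerm_at {n : ℕ} (j k : Fin (n+1)) (τ : Equiv.Perm (Fin n)) :
    mkPerm j k τ j = k := by
  simp [mkPerm, finSuccEquiv'_at, finSuccEquiv'_symm_none]

lemma mkPerm_succAbove {n : ℕ} (j k : Fin (n+1)) (τ : Equiv.Perm (Fin n)) (m : Fin n) :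
    mkPerm j k τ (j.succAbove m) = k.succAbove (τ m) := by
  simp [mkPerm, finSuccEquiv'_succAbove, finSuccEquiv'_symm_some]

/-- Tropical Laplace expansion of the permanent along row `j`. -/
lemma tperm_expand_row {n : ℕ} (M : Matrix (Fin (n+1)) (Fin (n+1)) ℝ) (j : Fin (n+1)) :
    tperm M = Finset.univ.sup' ⟨0, Finset.mem_univ 0⟩
      (fun k => M j k + tperm (del M j k)) := by
  apply le_antisymm
  · apply Finset.sup'_le
    intro σ _
    set k := σ j with hk
    -- construct τ with σ (j.succAbove m) = k.succAbove (τ m)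
    have hopt : ((finSuccEquiv' j).symm.trans (σ.trans (finSuccEquiv' k))) none = none := by
      simp [finSuccEquiv'_symm_none, ← hk, finSuccEquiv'_at]
    set e := (finSuccEquiv' j).symm.trans (σ.trans (finSuccEquiv' k)) with he
    have hsome : ∀ m : Fin n, ∃ y, e (some m) = some y := by
      intro m
      rcases h : e (some m) with _ | y
      · exact absurd (e.injective (h.trans hopt.symm)) (by simp)
      · exact ⟨y, rfl⟩
    set τ := e.removeNone with hτ
    have hτ' : ∀ m : Fin n, σ (j.succAbove m) = k.succAbove (τ.toFun m) := by
      intro m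
      have h2 : e (some m) = some (τ.toFun m) :=
        (Equiv.removeNone_some e (hsome m)).symm
      have h3 : finSuccEquiv' k (σ (j.succAbove m)) = some (τ.toFun m) := by
        simpa [he, finSuccEquiv'_symm_some] using h2
      have := congrArg (finSuccEquiv' k).symm h3
      simpa [finSuccEquiv'_symm_some] using this
    have hsum : ∑ x, M x (σ x) = M j k + ∑ m, (del M j k) m (τ m) := by
      rw [Fin.sum_univ_succAbove (fun x => M x (σ x)) j, ← hk]
      congr 1
      apply Finset.sum_congr rfl
      intro m _
      rw [hτ' m]; rfl
    rw [hsum]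
    have h1 : ∑ m, (del M j k) m (τ m) ≤ tperm (del M j k) :=
      Finset.le_sup' (fun σ : Equiv.Perm (Fin n) => ∑ m, (del M j k) m (σ m))
        (Finset.mem_univ τ)
    calc M j k + ∑ m, (del M j k) m (τ m) ≤ M j k + tperm (del M j k) := by linarith
      _ ≤ _ := Finset.le_sup' (fun k => M j k + tperm (del M j k)) (Finset.mem_univ k)
  · apply Finset.sup'_le
    intro k _
    rw [← le_sub_iff_add_le']
    apply Finset.sup'_le
    intro τ _
    rw [le_sub_iff_add_le']
    have hsum : M j k + ∑ m, (del M j k) m (τ m) = ∑ x, M x (mkPerm j k τ x) := by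
      rw [Fin.sum_univ_succAbove (fun x => M x (mkPerm j k τ x)) j, mkPerm_at]
      congr 1
      apply Finset.sum_congr rfl
      intro m _
      rw [mkPerm_succAbove]; rfl
    rw [hsum]
    exact Finset.le_sup' (fun σ : Equiv.Perm (Fin (n+1)) => ∑ x, M x (σ x))
      (Finset.mem_univ (mkPerm j k τ))

/-- For an (n+1)×(n+1) real matrix `A` (so of size ≥ 1) and indices `i, j`,
the `(i,j)` entry of the tropical product `A ⊙ adj(A)` equals the tropical permanent of the
matrix obtained from `A` by replacing its `j`-th row by its `i`-th row, i.e.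
`max_k (A i k + per(A(j|k))) = per(A_r(i ⇒ j))`. -/
theorem stmt0 {n : ℕ} (A : Matrix (Fin (n+1)) (Fin (n+1)) ℝ) (i j : Fin (n+1)) :
    tmul A (tadj A) i j = tperm (A.updateRow j (A i)) := by
  rw [tperm_expand_row (A.updateRow j (A i)) j]
  unfold tmul tadj
  apply Finset.sup'_congr _ rfl
  intro k _
  congr 1
  · rw [Matrix.updateRow_self]
  · congr 1
    ext m l
    simp [del, Matrix.updateRow_apply, Fin.succAbove_ne j m]
end

section
/- Let n ≥ 1, let A be an n×n real matrix and let b ∈ ℝⁿ. If (A ⊙ A⁻)_{ij} ≤ b_i − b_j for all i, j ∈ {1,…,n}, then the vector X* = A⁻ ⊙ b satisfies A ⊙ X* = b, i.e., max_{1≤j≤n} ( A_{ij} + X*_j ) = b_i for every i. -/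
open Matrix

lemma laplace_le {n : ℕ} (A : Matrix (Fin (n+1)) (Fin (n+1)) ℝ) (i : Fin (n+1)) :
    ∃ j, tperm A ≤ A i j + tperm (del A i j) := by
  obtain ⟨σ, -, hσ⟩ := Finset.exists_mem_eq_sup' (⟨1, Finset.mem_univ 1⟩ :
    (Finset.univ : Finset (Equiv.Perm (Fin (n+1)))).Nonempty)
    (fun σ : Equiv.Perm (Fin (n+1)) => ∑ l, A l (σ l))
  refine ⟨σ i, ?_⟩
  set j := σ i with hj
  set F : Option (Fin n) ≃ Option (Fin n) :=
    ((finSuccEquiv' i).symm.trans (σ.trans (finSuccEquiv' j)))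
  have hF : ∀ k : Fin n, F (some k) = finSuccEquiv' j (σ (i.succAbove k)) := by
    intro k
    simp [F, Equiv.symm_apply_eq, finSuccEquiv'_succAbove]
  have hF2 : ∀ k : Fin n, ∃ m, F (some k) = some m := by
    intro k
    have hne : σ (i.succAbove k) ≠ j := by
      intro hc
      exact Fin.succAbove_ne i k (σ.injective (hc.trans hj))
    obtain ⟨m, hm⟩ := Fin.exists_succAbove_eq hne
    exact ⟨m, by rw [hF, ← hm, finSuccEquiv'_succAbove]⟩
  set τ : Equiv.Perm (Fin n) := F.removeNone
  have hτ : ∀ k : Fin n, j.succAbove (τ k) = σ (i.succAbove k) := by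
    intro k
    have h1 := Equiv.removeNone_some F (hF2 k)
    rw [hF] at h1
    have hne : σ (i.succAbove k) ≠ j := by
      intro hc
      exact Fin.succAbove_ne i k (σ.injective (hc.trans hj))
    obtain ⟨m, hm⟩ := Fin.exists_succAbove_eq hne
    rw [← hm, finSuccEquiv'_succAbove] at h1
    rw [← hm]
    exact congrArg _ (Option.some_injective _ h1)
  have hsum : ∑ k : Fin n, del A i j k (τ k)
      = ∑ k : Fin n, A (i.succAbove k) (σ (i.succAbove k)) := by
    refine Finset.sum_congr rfl fun k _ => ?_
    simp [del, Matrix.submatrix_apply, hτ k]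
  have hle : ∑ k : Fin n, del A i j k (τ k) ≤ tperm (del A i j) :=
    Finset.le_sup' (fun τ : Equiv.Perm (Fin n) => ∑ k, del A i j k (τ k))
      (Finset.mem_univ τ)
  have hexp : tperm A = A i j + ∑ k : Fin n, A (i.succAbove k) (σ (i.succAbove k)) := by
    rw [tperm, hσ, Fin.sum_univ_succAbove (fun l => A l (σ l)) i]
  rw [hexp, ← hsum]
  linarith

/-- If `(A ⊙ A⁻)_{ij} ≤ b_i - b_j` for all `i, j`, then `X* = A⁻ ⊙ b`
satisfies `A ⊙ X* = b`. -/
theorem stmt3 {n : ℕ} (A : Matrix (Fin (n+1)) (Fin (n+1)) ℝ) (b : Fin (n+1) → ℝ)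
    (h : ∀ i j, tmul A (pinv A) i j ≤ b i - b j) :
    ∀ i, tmulVec A (tmulVec (pinv A) b) i = b i := by
  intro i
  apply le_antisymm
  · apply Finset.sup'_le
    intro j _
    have h2 : Finset.univ.sup' ⟨0, Finset.mem_univ 0⟩
        (fun k => pinv A j k + b k) ≤ b i - A i j := by
      apply Finset.sup'_le
      intro k _
      have h3 : A i j + pinv A j k ≤ tmul A (pinv A) i k :=
        Finset.le_sup' (fun j => A i j + pinv A j k) (Finset.mem_univ j)
      have := h i k
      linarith
    simpa [tmulVec] using by linarith [h2]
  · obtain ⟨j, hj⟩ := laplace_le A i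
    have h1 : pinv A j i + b i ≤ tmulVec (pinv A) b j :=
      Finset.le_sup' (fun k => pinv A j k + b k) (Finset.mem_univ i)
    have h2 : A i j + tmulVec (pinv A) b j ≤ tmulVec A (tmulVec (pinv A) b) i :=
      Finset.le_sup' (fun j => A i j + tmulVec (pinv A) b j) (Finset.mem_univ j)
    have hp : pinv A j i = tperm (del A i j) - tperm A := rfl
    linarith
end

section
/- Let n ≥ 1, let A be an n×n real matrix and let b ∈ ℝⁿ. If (A ⊙ A⁻)_{ij} ≤ b_i − b_j for all i, j ∈ {1,…,n}, then X* = A⁻ ⊙ b is the maximal solution of the system A ⊙ X = b: every Y ∈ ℝⁿ with A ⊙ Y = b satisfies Y_j ≤ X*_j for all j. -/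
open Matrix

/-- If `(A ⊙ A⁻)_{ij} ≤ b_i - b_j` for all `i, j`, then `X* = A⁻ ⊙ b` is the
maximal solution of `A ⊙ X = b`: every solution `Y` satisfies `Y ≤ X*` entrywise. -/
theorem stmt4 {n : ℕ} (A : Matrix (Fin (n+1)) (Fin (n+1)) ℝ) (b : Fin (n+1) → ℝ)
    (h : ∀ i j, tmul A (pinv A) i j ≤ b i - b j) :
    ∀ Y : Fin (n+1) → ℝ, (∀ i, tmulVec A Y i = b i) →
      ∀ j, Y j ≤ tmulVec (pinv A) b j := by
  intro Y hY j
  obtain ⟨σ, -, hσ⟩ := Finset.exists_mem_eq_sup'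
    (⟨1, Finset.mem_univ 1⟩ : (Finset.univ : Finset (Equiv.Perm (Fin (n+1)))).Nonempty)
    (fun σ : Equiv.Perm (Fin (n+1)) => ∑ i, A i (σ i))
  set i := σ.symm j with hi
  have hij : σ i = j := σ.apply_symm_apply j
  -- the induced permutation on Fin n
  set e : Option (Fin n) ≃ Option (Fin n) :=
    ((finSuccEquiv' i).symm.trans (σ : Fin (n+1) ≃ Fin (n+1))).trans (finSuccEquiv' j) with he
  set τ : Fin n ≃ Fin n := e.removeNone with hτ
  have hkey : ∀ k : Fin n, σ (i.succAbove k) = j.succAbove (τ k) := by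
    intro k
    have hne : σ (i.succAbove k) ≠ j := by
      intro hc
      exact Fin.succAbove_ne i k (σ.injective (hc.trans hij.symm))
    obtain ⟨m, hm⟩ := Fin.exists_succAbove_eq hne
    have hsome : e (some k) = some m := by
      simp [he, finSuccEquiv'_symm_some, ← hm, finSuccEquiv'_succAbove]
    have := Equiv.removeNone_some e ⟨m, hsome⟩
    rw [hsome] at this
    rw [← hm]
    congr 1
    exact (Option.some_injective _ this).symm
  have hper : tperm A ≤ A i j + tperm (del A i j) := by
    have h1 : ∑ x, A x (σ x) = A i (σ i) + ∑ k, A (i.succAbove k) (σ (i.succAbove k)) :=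
      Fin.sum_univ_succAbove _ i
    have h2 : ∑ k, A (i.succAbove k) (σ (i.succAbove k))
        = ∑ k, del A i j k (τ k) := by
      refine Finset.sum_congr rfl fun k _ => ?_
      rw [hkey k]; rfl
    have h3 : ∑ k : Fin n, del A i j k (τ k) ≤ tperm (del A i j) :=
      Finset.le_sup' (fun σ : Equiv.Perm (Fin n) => ∑ x, del A i j x (σ x))
        (Finset.mem_univ τ)
    have h0 : tperm A = A i (σ i) + ∑ k, A (i.succAbove k) (σ (i.succAbove k)) :=
      hσ.trans h1
    rw [h0, hij]; linarith
  have hAb : A i j + Y j ≤ b i := by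
    rw [← hY i]
    exact Finset.le_sup' (fun k => A i k + Y k) (Finset.mem_univ j)
  have hfin : pinv A j i + b i ≤ tmulVec (pinv A) b j :=
    Finset.le_sup' (fun k => pinv A j k + b k) (Finset.mem_univ i)
  have hpinv : pinv A j i = tperm (del A i j) - tperm A := rfl
  rw [hpinv] at hfin
  linarith
end

section
/- Let n ≥ 1, let A be an n×n real matrix and let b ∈ ℝⁿ. Suppose X* = A⁻ ⊙ b satisfies A ⊙ X* = b. Then (A⁻ ⊙ A)_{kl} ≤ X*_k − X*_l for all k, l ∈ {1,…,n}. -/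
open Matrix

/-- If `X* = A⁻ ⊙ b` satisfies `A ⊙ X* = b`, then
`(A⁻ ⊙ A)_{kl} ≤ X*_k - X*_l` for all `k, l`. -/
theorem stmt6 {n : ℕ} (A : Matrix (Fin (n+1)) (Fin (n+1)) ℝ) (b : Fin (n+1) → ℝ)
    (h : ∀ i, tmulVec A (tmulVec (pinv A) b) i = b i) :
    ∀ k l, tmul (pinv A) A k l ≤ tmulVec (pinv A) b k - tmulVec (pinv A) b l := by
  intro k l
  apply Finset.sup'_le
  intro j _
  have h1 : A j l + tmulVec (pinv A) b l ≤ b j := by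
    rw [← h j]
    exact Finset.le_sup' (fun m => A j m + tmulVec (pinv A) b m) (Finset.mem_univ l)
  have h2 : pinv A k j + b j ≤ tmulVec (pinv A) b k :=
    Finset.le_sup' (fun m => pinv A k m + b m) (Finset.mem_univ j)
  linarith
end

section
/- Let n ≥ 1, let A be an n×n real matrix and let b ∈ ℝⁿ. Suppose X* = A⁻ ⊙ b satisfies A ⊙ X* = b, and suppose that all the inequalities are strict: (A⁻ ⊙ A)_{kl} < X*_k − X*_l for all k ≠ l. Then X* is the unique solution of the system: every Y ∈ ℝⁿ with A ⊙ Y = b equals X*. -/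
/-!
If `A ⊙ Y = b`, then by associativity `X* = A⁻ ⊙ b = (A⁻ ⊙ A) ⊙ Y`, and the tropical Laplace
expansion `per A = maxⱼ (A j k + per A(j|k))` says exactly that `A⁻ ⊙ A` has zero diagonal.
Hence `Y ≤ X*`, and each `X*_k` equals `(A⁻ ⊙ A)_{kl} + Y_l` for some `l`. If `l ≠ k`, strictness
gives `X*_k < X*_k - X*_l + Y_l ≤ X*_k`; so `l = k` and `X*_k = Y_k`.
-/

open Matrix

open Finset Equiv

lemma sum_le_tperm {p : ℕ} (A : Matrix (Fin p) (Fin p) ℝ) (σ : Perm (Fin p)) :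
    ∑ i, A i (σ i) ≤ tperm A :=
  le_sup' (fun σ : Perm (Fin p) => ∑ i, A i (σ i)) (mem_univ σ)

section Laplace

variable {n : ℕ}

lemma Equiv.Perm.exists_apply_succAbove_eq (σ : Perm (Fin (n+1))) (j : Fin (n+1)) :
    ∃ τ : Perm (Fin n), ∀ i, σ (j.succAbove i) = (σ j).succAbove (τ i) := by
  -- conjugate `σ` by the identifications `Fin (n+1) ≃ Option (Fin n)` sending `j`, `σ j` to `none`
  set e : Perm (Option (Fin n)) := (finSuccEquiv' j).symm.trans (σ.trans (finSuccEquiv' (σ j)))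
  refine ⟨removeNone e, fun i => ?_⟩
  have hsome : ∃ x, e (some i) = some x :=
    Option.ne_none_iff_exists'.mp (by simp [e])
  exact finSuccEquiv'_eq_some.mp (removeNone_some e hsome).symm

lemma Equiv.Perm.exists_extend_succAbove (j k : Fin (n+1)) (τ : Perm (Fin n)) :
    ∃ σ : Perm (Fin (n+1)), σ j = k ∧ ∀ i, σ (j.succAbove i) = k.succAbove (τ i) :=
  ⟨(finSuccEquiv' j).trans (τ.optionCongr.trans (finSuccEquiv' k).symm), by simp, by simp⟩

lemma sum_apply_perm_eq_add_sum_del (A : Matrix (Fin (n+1)) (Fin (n+1)) ℝ)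
    {σ : Perm (Fin (n+1))} {j : Fin (n+1)} {τ : Perm (Fin n)}
    (h : ∀ i, σ (j.succAbove i) = (σ j).succAbove (τ i)) :
    ∑ i, A i (σ i) = A j (σ j) + ∑ i, del A j (σ j) i (τ i) := by
  simp [Fin.sum_univ_succAbove _ j, del, h]

theorem tperm_eq_sup'_add_tperm_del (A : Matrix (Fin (n+1)) (Fin (n+1)) ℝ) (k : Fin (n+1)) :
    tperm A = univ.sup' univ_nonempty (fun j => A j k + tperm (del A j k)) := by
  apply le_antisymm
  · refine sup'_le _ _ fun σ _ => ?_
    obtain ⟨τ, hτ⟩ := σ.exists_apply_succAbove_eq (σ.symm k)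
    rw [sum_apply_perm_eq_add_sum_del A hτ, σ.apply_symm_apply]
    exact (add_le_add le_rfl (sum_le_tperm _ τ)).trans
      (le_sup' (fun j => A j k + tperm (del A j k)) (mem_univ _))
  · refine sup'_le _ _ fun j _ => ?_
    rw [← le_sub_iff_add_le']
    refine sup'_le _ _ fun τ _ => ?_
    rw [le_sub_iff_add_le']
    obtain ⟨σ, rfl, hσ⟩ := Perm.exists_extend_succAbove j k τ
    rw [← sum_apply_perm_eq_add_sum_del A hσ]
    exact sum_le_tperm A σ

end Laplace

lemma tmulVec_tmulVec {l m p : ℕ} (P : Matrix (Fin l) (Fin (m+1)) ℝ)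
    (A : Matrix (Fin (m+1)) (Fin (p+1)) ℝ) (Y : Fin (p+1) → ℝ) :
    tmulVec P (tmulVec A Y) = tmulVec (tmul P A) Y := by
  funext k
  calc tmulVec P (tmulVec A Y) k
      = univ.sup' univ_nonempty fun j => univ.sup' univ_nonempty fun l => P k j + (A j l + Y l) :=
        sup'_congr _ rfl fun j _ => add_sup' _ _ _ _
    _ = univ.sup' univ_nonempty fun l => univ.sup' univ_nonempty fun j => P k j + A j l + Y l := by
        simp only [← add_assoc]
        exact Finset.sup'_comm _ _ _
    _ = tmulVec (tmul P A) Y k := sup'_congr _ rfl fun l _ => (sup'_add _ _ _ _).symm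

lemma tmul_pinv_self_apply_self {n : ℕ} (A : Matrix (Fin (n+1)) (Fin (n+1)) ℝ) (k : Fin (n+1)) :
    tmul (pinv A) A k k = 0 :=
  calc tmul (pinv A) A k k
      = univ.sup' univ_nonempty fun j => A j k + tperm (del A j k) + -tperm A :=
        sup'_congr _ rfl fun j _ => by simp only [pinv]; ring
    _ = tperm A + -tperm A := by rw [← sup'_add, ← tperm_eq_sup'_add_tperm_del]
    _ = 0 := add_neg_cancel _

lemma eq_tmulVec_self_of_apply_lt_sub {m : ℕ} (M : Matrix (Fin (m+1)) (Fin (m+1)) ℝ)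
    (Y : Fin (m+1) → ℝ) (hdiag : ∀ k, M k k = 0)
    (hlt : ∀ k l, k ≠ l → M k l < tmulVec M Y k - tmulVec M Y l) :
    Y = tmulVec M Y := by
  have hle : ∀ l, Y l ≤ tmulVec M Y l := fun l => by
    have := le_sup' (fun j => M l j + Y j) (mem_univ l)
    rw [hdiag, zero_add] at this
    exact this
  funext k
  obtain ⟨l, -, hl⟩ := exists_mem_eq_sup' univ_nonempty (fun l => M k l + Y l)
  change tmulVec M Y k = M k l + Y l at hl
  obtain rfl : l = k := by
    by_contra hlk
    linarith [hlt k l (Ne.symm hlk), hle l]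
  rw [hl, hdiag, zero_add]

theorem stmt7_general {n : ℕ} (A : Matrix (Fin (n+1)) (Fin (n+1)) ℝ) (b : Fin (n+1) → ℝ)
    (hstrict : ∀ k l, k ≠ l →
      tmul (pinv A) A k l < tmulVec (pinv A) b k - tmulVec (pinv A) b l) :
    ∀ Y : Fin (n+1) → ℝ, (∀ i, tmulVec A Y i = b i) → Y = tmulVec (pinv A) b := by
  intro Y hY
  obtain rfl : tmulVec A Y = b := funext hY
  rw [tmulVec_tmulVec] at hstrict ⊢
  exact eq_tmulVec_self_of_apply_lt_sub _ Y (tmul_pinv_self_apply_self A) hstrict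

/-- Suppose `X* = A⁻ ⊙ b` satisfies `A ⊙ X* = b` and all inequalities
`(A⁻ ⊙ A)_{kl} < X*_k - X*_l` are strict for `k ≠ l`. Then `X*` is the unique solution:
every `Y` with `A ⊙ Y = b` equals `X*`. -/
theorem stmt7 {n : ℕ} (A : Matrix (Fin (n+1)) (Fin (n+1)) ℝ) (b : Fin (n+1) → ℝ)
    (hsol : ∀ i, tmulVec A (tmulVec (pinv A) b) i = b i)
    (hstrict : ∀ k l, k ≠ l →
      tmul (pinv A) A k l < tmulVec (pinv A) b k - tmulVec (pinv A) b l) :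
    ∀ Y : Fin (n+1) → ℝ, (∀ i, tmulVec A Y i = b i) → Y = tmulVec (pinv A) b :=
  stmt7_general A b hstrict
end

section
/- Let A be an m×n real matrix, b ∈ ℝᵐ, and 1 ≤ k < n. Suppose there exist real scalars η_{ij} for 1 ≤ i ≤ k and k+1 ≤ j ≤ n such that every column of A beyond the k-th is a tropical linear combination of the first k columns: A_{rj} = max_{1≤i≤k} ( A_{ri} + η_{ij} ) for all rows r ∈ {1,…,m} and all j ∈ {k+1,…,n}. Let B be the m×k matrix consisting of the first k columns of A. Then the system A ⊙ X = b has a solution X ∈ ℝⁿ if and only if the reduced system B ⊙ Y = b has a solution Y ∈ ℝᵏ. -/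
/-! Columns `k+1, …, n` of `A` lie in the tropical span of the first `k` columns, so both
systems reach the same right-hand sides. A solution `x` of the full system folds into
`y i = max (x i, max_j (η i j + x j))`, and a solution `y` of the reduced system extends by
`x j = min_i (y i - η i j)`, which keeps every extra term `A r j + x j` below the maximum. -/

open Finset Matrix

section TropicalMulVec

variable {ρ ι κ α : Type*} [Fintype ι] [Nonempty ι] [Fintype κ] [Nonempty κ]

def tropMulVec [LinearOrder α] [Add α] (A : Matrix ρ ι α) (x : ι → α) : ρ → α :=
  fun r => univ.sup' univ_nonempty fun j => A r j + x j

infixr:73 " ⊙ᵥ " => tropMulVec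

section LinearOrder

variable [LinearOrder α] [Add α]

theorem add_le_tropMulVec (A : Matrix ρ ι α) (x : ι → α) (r : ρ) (j : ι) :
    A r j + x j ≤ (A ⊙ᵥ x) r :=
  le_sup' (fun j => A r j + x j) (mem_univ j)

theorem exists_tropMulVec_eq (A : Matrix ρ ι α) (x : ι → α) (r : ρ) :
    ∃ j, (A ⊙ᵥ x) r = A r j + x j := by
  obtain ⟨j, -, hj⟩ := exists_mem_eq_sup' univ_nonempty fun j => A r j + x j
  exact ⟨j, hj⟩

theorem tropMulVec_le_tropMulVec {A : Matrix ρ ι α} {B : Matrix ρ κ α} {x : ι → α}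
    {y : κ → α}
    (h : ∀ r j, ∃ i, A r j + x j ≤ B r i + y i) : A ⊙ᵥ x ≤ B ⊙ᵥ y := fun r =>
  sup'_le _ _ fun j _ =>
    let ⟨i, hi⟩ := h r j
    hi.trans (add_le_tropMulVec B y r i)

end LinearOrder

variable [AddCommGroup α] [LinearOrder α] [IsOrderedAddMonoid α]
  {A : Matrix ρ ι α} {f : κ → ι} {η : κ → ι → α}

theorem exists_submatrix_tropMulVec_eq
    (hη : ∀ j ∉ Set.range f, Aᵀ j = A.submatrix id f ⊙ᵥ (η · j)) (x : ι → α) :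
    ∃ y, A.submatrix id f ⊙ᵥ y = A ⊙ᵥ x := by
  classical
  have hdom : ∀ r i, ∀ j ∉ Set.range f, A r (f i) + η i j ≤ A r j := fun r i j hj => by
    rw [← transpose_apply A j r, hη j hj]
    exact add_le_tropMulVec (A.submatrix id f) (η · j) r i
  let g i j := if j ∈ Set.range f then x (f i) else η i j + x j
  let y i := univ.sup' univ_nonempty (g i)
  have hxy : ∀ i, x (f i) ≤ y i := fun i =>
    le_sup'_of_le (g i) (mem_univ (f i)) (by simp [g])
  have hηy : ∀ i, ∀ j ∉ Set.range f, η i j + x j ≤ y i := fun i j hj =>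
    le_sup'_of_le (g i) (mem_univ j) (by simp only [g, if_neg hj, le_rfl])
  refine ⟨y, le_antisymm (tropMulVec_le_tropMulVec fun r i => ?_)
    (tropMulVec_le_tropMulVec fun r j => ?_)⟩
  · obtain ⟨j, -, hy⟩ := exists_mem_eq_sup' univ_nonempty (g i)
    simp only [submatrix_apply, id_eq, y, hy, g]
    split_ifs with hj
    · exact ⟨f i, le_rfl⟩
    · exact ⟨j, by rw [← add_assoc]; exact add_le_add (hdom r i j hj) le_rfl⟩
  · by_cases hj : j ∈ Set.range f
    · obtain ⟨i, rfl⟩ := hj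
      exact ⟨i, add_le_add le_rfl (hxy i)⟩
    · obtain ⟨i, hi⟩ := exists_tropMulVec_eq (A.submatrix id f) (η · j) r
      refine ⟨i, ?_⟩
      rw [← transpose_apply A j r, hη j hj, hi, submatrix_apply, id_eq, add_assoc]
      exact add_le_add le_rfl (hηy i j hj)

theorem exists_tropMulVec_eq_submatrix_tropMulVec (hf : Function.Injective f)
    (hη : ∀ j ∉ Set.range f, Aᵀ j = A.submatrix id f ⊙ᵥ (η · j)) (y : κ → α) :
    ∃ x, A ⊙ᵥ x = A.submatrix id f ⊙ᵥ y := by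
  -- off the range of `f`, `x j` is small enough that column `j` never raises a row maximum
  let x := Function.extend f y fun j => univ.inf' univ_nonempty fun i => y i - η i j
  have hx : ∀ i, x (f i) = y i := hf.extend_apply _ _
  refine ⟨x, le_antisymm (tropMulVec_le_tropMulVec fun r j => ?_)
    (tropMulVec_le_tropMulVec fun r i => ⟨f i, by rw [hx]; rfl⟩)⟩
  by_cases hj : j ∈ Set.range f
  · obtain ⟨i, rfl⟩ := hj
    exact ⟨i, by rw [hx]; rfl⟩
  · obtain ⟨i, hi⟩ := exists_tropMulVec_eq (A.submatrix id f) (η · j) r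
    have hxj : x j = univ.inf' univ_nonempty fun i => y i - η i j :=
      Function.extend_apply' _ _ _ (by simpa using hj)
    refine ⟨i, ?_⟩
    rw [← transpose_apply A j r, hη j hj, hi, submatrix_apply, id_eq, add_assoc, hxj]
    refine add_le_add le_rfl ?_
    calc η i j + univ.inf' univ_nonempty (fun i => y i - η i j)
        ≤ η i j + (y i - η i j) := add_le_add le_rfl (inf'_le _ (mem_univ i))
      _ = y i := add_sub_cancel _ _

theorem range_tropMulVec_submatrix (hf : Function.Injective f)
    (hη : ∀ j ∉ Set.range f, Aᵀ j = A.submatrix id f ⊙ᵥ (η · j)) :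
    Set.range (A.submatrix id f ⊙ᵥ ·) = Set.range (A ⊙ᵥ ·) := by
  apply le_antisymm
  · rintro _ ⟨y, rfl⟩
    exact exists_tropMulVec_eq_submatrix_tropMulVec hf hη y
  · rintro _ ⟨x, rfl⟩
    exact exists_submatrix_tropMulVec_eq hη x

end TropicalMulVec

/-- column analysis: Let `A` be an `m × n` real matrix, `b ∈ ℝ^m`, and
`1 ≤ k < n`. Suppose there are scalars `η i j` (for `i` among the first `k` column indices
and `j` among the remaining ones) such that every column of `A` beyond the `k`-th is a
tropical linear combination of the first `k` columns:
`A r j = max_{i < k} (A r i + η i j)` for all rows `r` and all columns `j` with `k ≤ j`.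
Let `B` be the `m × k` matrix of the first `k` columns of `A` (here `B i j = A i (castLE j)`).
Then the max-plus system `A ⊙ X = b` has a solution `X ∈ ℝ^n` iff the reduced system
`B ⊙ Y = b` has a solution `Y ∈ ℝ^k`. -/
theorem stmt10 {m n k : ℕ} (hk : 1 ≤ k) (hkn : k < n)
    (A : Matrix (Fin m) (Fin n) ℝ) (b : Fin m → ℝ)
    (η : Fin k → Fin n → ℝ)
    (hη : ∀ (r : Fin m) (j : Fin n), k ≤ (j : ℕ) →
      A r j = Finset.univ.sup' ⟨⟨0, hk⟩, Finset.mem_univ _⟩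
        (fun i : Fin k => A r (Fin.castLE hkn.le i) + η i j)) :
    (∃ X : Fin n → ℝ, ∀ i,
        Finset.univ.sup' ⟨⟨0, by omega⟩, Finset.mem_univ _⟩
          (fun j : Fin n => A i j + X j) = b i) ↔
    (∃ Y : Fin k → ℝ, ∀ i,
        Finset.univ.sup' ⟨⟨0, hk⟩, Finset.mem_univ _⟩
          (fun j : Fin k => A i (Fin.castLE hkn.le j) + Y j) = b i) := by
  have : Nonempty (Fin k) := ⟨⟨0, hk⟩⟩
  have : Nonempty (Fin n) := ⟨⟨0, by omega⟩⟩
  have hcolumns : ∀ j ∉ Set.range (Fin.castLE hkn.le),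
      Aᵀ j = A.submatrix id (Fin.castLE hkn.le) ⊙ᵥ (η · j) := fun j hj => by
    rw [Fin.range_castLE, Set.mem_ofPred_eq, not_lt] at hj
    exact funext fun r => hη r j hj
  have hrange := range_tropMulVec_submatrix (Fin.castLE_injective hkn.le) hcolumns
  have hsolvable := (Set.ext_iff.mp hrange b).symm
  simp only [Set.mem_range, funext_iff] at hsolvable
  exact hsolvable
end

section
/- Let A be an m×n real matrix, b ∈ ℝᵐ, and 1 ≤ h < m. Suppose there exist real scalars ξ_{ij} for h+1 ≤ i ≤ m and 1 ≤ j ≤ h such that every row of A beyond the h-th is a tropical linear combination of the first h rows: A_{ic} = max_{1≤j≤h} ( A_{jc} + ξ_{ij} ) for all columns c ∈ {1,…,n} and all i ∈ {h+1,…,m}. If the system A ⊙ X = b has a solution X ∈ ℝⁿ, then the compatibility equalities b_i = max_{1≤j≤h} ( b_j + ξ_{ij} ) hold for every i ∈ {h+1,…,m}. -/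
/-! The map `r ↦ max_c (r c + X c)` is max-plus linear in the row `r`, so every tropical relation
among the rows of `A` is inherited by the entries of `A ⊙ X = b`. -/

namespace Finset

variable {ι κ α : Type*} [AddCommGroup α] [LinearOrder α] [IsOrderedAddMonoid α]

theorem sup'_add_eq_sup'_sup'_add {s : Finset ι} {t : Finset κ} (hs : s.Nonempty)
    (ht : t.Nonempty) {r x : ι → α} {a : κ → ι → α} {ξ : κ → α}
    (hr : ∀ c ∈ s, r c = t.sup' ht fun j => a j c + ξ j) :
    (s.sup' hs fun c => r c + x c) = t.sup' ht fun j => (s.sup' hs fun c => a j c + x c) + ξ j :=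
  calc (s.sup' hs fun c => r c + x c)
      = s.sup' hs fun c => t.sup' ht fun j => a j c + x c + ξ j :=
        sup'_congr hs rfl fun c hc => by simp only [hr c hc, sup'_add, add_right_comm]
    _ = t.sup' ht fun j => (s.sup' hs fun c => a j c + x c) + ξ j := by
        simp only [Finset.sup'_comm hs ht, sup'_add]

end Finset

/-- row analysis, necessity of compatibility: Let `A` be an `m × (n+1)` real
matrix, `b ∈ ℝ^m`, `1 ≤ h < m`. Suppose there are scalars `ξ i j` (for rows `i` beyond the
`h`-th and `j` among the first `h` row indices) such that every row of `A` beyond the `h`-th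
is a tropical linear combination of the first `h` rows:
`A i c = max_{j < h} (A j c + ξ i j)` for all columns `c` and all rows `i` with `h ≤ i`.
If the max-plus system `A ⊙ X = b` has a solution `X`, then the compatibility equalities
`b i = max_{j < h} (b j + ξ i j)` hold for every row `i` with `h ≤ i`. -/
theorem stmt11 {m n h : ℕ} (hh : 1 ≤ h) (hhm : h < m)
    (A : Matrix (Fin m) (Fin (n+1)) ℝ) (b : Fin m → ℝ)
    (ξ : Fin m → Fin h → ℝ)
    (hξ : ∀ i : Fin m, h ≤ (i : ℕ) → ∀ c : Fin (n+1),
      A i c = Finset.univ.sup' ⟨⟨0, hh⟩, Finset.mem_univ _⟩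
        (fun j : Fin h => A (Fin.castLE hhm.le j) c + ξ i j))
    (X : Fin (n+1) → ℝ)
    (hX : ∀ i, Finset.univ.sup' ⟨0, Finset.mem_univ 0⟩
        (fun j : Fin (n+1) => A i j + X j) = b i) :
    ∀ i : Fin m, h ≤ (i : ℕ) →
      b i = Finset.univ.sup' ⟨⟨0, hh⟩, Finset.mem_univ _⟩
        (fun j : Fin h => b (Fin.castLE hhm.le j) + ξ i j) := by
  intro i hi
  calc b i = _ := (hX i).symm
    _ = _ := Finset.sup'_add_eq_sup'_sup'_add _ _ fun c _ => hξ i hi c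
    _ = _ := by simp only [hX]
end

section
/- Let A be an m×n real matrix, b ∈ ℝᵐ, and 1 ≤ h < m. Suppose there exist real scalars ξ_{ij} for h+1 ≤ i ≤ m and 1 ≤ j ≤ h such that A_{ic} = max_{1≤j≤h} ( A_{jc} + ξ_{ij} ) for all columns c ∈ {1,…,n} and all i ∈ {h+1,…,m}, and suppose the compatibility equalities b_i = max_{1≤j≤h} ( b_j + ξ_{ij} ) hold for every i ∈ {h+1,…,m}. Let B be the h×n matrix consisting of the first h rows of A and b' ∈ ℝʰ the vector of the first h entries of b. Then the system A ⊙ X = b has a solution X ∈ ℝⁿ if and only if the reduced system B ⊙ X = b' has a solution X ∈ ℝⁿ. -/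
/-! If each of the later rows of `A`, and the matching entry of `b`, is the same tropical
combination of the first `h` rows, then by distributivity of `+` over `max` and by exchanging
the two maxima, the corresponding equation of `A ⊙ X = b` is the same tropical combination of
the first `h` equations; so it holds as soon as those do. -/

theorem Finset.sup'_add_eq_sup'_sup'_add_of_eq_sup' {ι κ G : Type*} [AddCommGroup G]
    [LinearOrder G] [IsOrderedAddMonoid G] {s : Finset ι} {t : Finset κ} (hs : s.Nonempty)
    (ht : t.Nonempty) {a X : ι → G} {r : κ → ι → G} {ξ : κ → G}
    (ha : ∀ c ∈ s, a c = t.sup' ht fun k => r k c + ξ k) :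
    (s.sup' hs fun c => a c + X c) = t.sup' ht fun k => (s.sup' hs fun c => r k c + X c) + ξ k :=
  calc (s.sup' hs fun c => a c + X c)
      = s.sup' hs fun c => t.sup' ht fun k => r k c + X c + ξ k := by
        refine Finset.sup'_congr hs rfl fun c hc => ?_
        rw [ha c hc, Finset.sup'_add]
        exact Finset.sup'_congr ht rfl fun k _ => add_right_comm _ _ _
    _ = t.sup' ht fun k => s.sup' hs fun c => r k c + X c + ξ k := Finset.sup'_comm hs ht _
    _ = t.sup' ht fun k => (s.sup' hs fun c => r k c + X c) + ξ k := by
        simp only [Finset.sup'_add]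

/-- row analysis, reduction: Let `A` be an `m × (n+1)` real matrix,
`b ∈ ℝ^m`, `1 ≤ h < m`. Suppose there are scalars `ξ i j` such that every row of `A`
beyond the `h`-th is a tropical linear combination of the first `h` rows:
`A i c = max_{j < h} (A j c + ξ i j)` for all `c` and all `i` with `h ≤ i`, and suppose
the compatibility equalities `b i = max_{j < h} (b j + ξ i j)` hold for all `i` with
`h ≤ i`. Let `B` be the `h × (n+1)` matrix of the first `h` rows of `A` and `b'` the
vector of the first `h` entries of `b`. Then `A ⊙ X = b` has a solution iff the reduced
system `B ⊙ X = b'` has a solution. -/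
theorem stmt12 {m n h : ℕ} (hh : 1 ≤ h) (hhm : h < m)
    (A : Matrix (Fin m) (Fin (n+1)) ℝ) (b : Fin m → ℝ)
    (ξ : Fin m → Fin h → ℝ)
    (hξ : ∀ i : Fin m, h ≤ (i : ℕ) → ∀ c : Fin (n+1),
      A i c = Finset.univ.sup' ⟨⟨0, hh⟩, Finset.mem_univ _⟩
        (fun j : Fin h => A (Fin.castLE hhm.le j) c + ξ i j))
    (hb : ∀ i : Fin m, h ≤ (i : ℕ) →
      b i = Finset.univ.sup' ⟨⟨0, hh⟩, Finset.mem_univ _⟩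
        (fun j : Fin h => b (Fin.castLE hhm.le j) + ξ i j)) :
    (∃ X : Fin (n+1) → ℝ, ∀ i : Fin m,
        Finset.univ.sup' ⟨0, Finset.mem_univ 0⟩
          (fun j : Fin (n+1) => A i j + X j) = b i) ↔
    (∃ X : Fin (n+1) → ℝ, ∀ i : Fin h,
        Finset.univ.sup' ⟨0, Finset.mem_univ 0⟩
          (fun j : Fin (n+1) => A (Fin.castLE hhm.le i) j + X j) = b (Fin.castLE hhm.le i)) := by
  constructor
  · rintro ⟨X, hX⟩
    exact ⟨X, fun i => hX _⟩
  · rintro ⟨X, hX⟩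
    refine ⟨X, fun i => ?_⟩
    rcases lt_or_ge (i : ℕ) h with hi | hi
    · exact hX ⟨i, hi⟩
    -- `rw` cannot fire here: the statement's nonemptiness witnesses are bare `Exists.intro`s.
    · refine (Finset.sup'_add_eq_sup'_sup'_add_of_eq_sup' _ _ fun c _ => hξ i hi c).trans ?_
      rw [hb i hi]
      simp only [hX]
end

section
/- Let A be an m×n real matrix with n ≥ 1, let b ∈ ℝᵐ, let N = Aᵀ ⊙ A be the n×n tropical product of the transpose of A with A, and let c = Aᵀ ⊙ b ∈ ℝⁿ. If (N ⊙ N⁻)_{ij} ≤ c_i − c_j for all i, j ∈ {1,…,n}, then every X ∈ ℝⁿ with A ⊙ X = b satisfies X ≤ N⁻ ⊙ c entrywise. -/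
open Matrix

/-- Column Laplace expansion inequality: for each column `j` there is a row `k`
with `per N ≤ N k j + per (N(k|j))`. -/
lemma tperm_le_col {p : ℕ} (N : Matrix (Fin (p+1)) (Fin (p+1)) ℝ) (j : Fin (p+1)) :
    ∃ k, tperm N ≤ N k j + tperm (del N k j) := by
  obtain ⟨σ, -, hσ⟩ := Finset.exists_mem_eq_sup'
    (⟨1, Finset.mem_univ 1⟩ : (Finset.univ : Finset (Equiv.Perm (Fin (p+1)))).Nonempty)
    (fun σ => ∑ i, N i (σ i))
  set k : Fin (p+1) := σ.symm j with hk
  have hσk : σ k = j := σ.apply_symm_apply j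
  refine ⟨k, ?_⟩
  -- split off the k-th term
  have hsum : ∑ i, N i (σ i) = N k j + ∑ i, N (k.succAbove i) (σ (k.succAbove i)) := by
    rw [Fin.sum_univ_succAbove (fun i => N i (σ i)) k, hσk]
  -- build the permutation on `Fin p`
  have hne : ∀ i : Fin p, σ (k.succAbove i) ≠ j := by
    intro i hcon
    exact Fin.succAbove_ne k i (σ.injective (hcon.trans hσk.symm))
  have hex : ∀ i : Fin p, ∃ t, j.succAbove t = σ (k.succAbove i) :=
    fun i => Fin.exists_succAbove_eq (hne i)
  choose f hf using hex
  have finj : Function.Injective f := by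
    intro a b hab
    have : σ (k.succAbove a) = σ (k.succAbove b) := by
      rw [← hf a, ← hf b, hab]
    exact Fin.succAbove_right_injective (σ.injective this)
  let τ : Equiv.Perm (Fin p) :=
    Equiv.ofBijective f (Finite.injective_iff_bijective.mp finj)
  have hτ : ∑ i, del N k j i (τ i) = ∑ i, N (k.succAbove i) (σ (k.succAbove i)) := by
    refine Finset.sum_congr rfl fun i _ => ?_
    simp only [del, Matrix.submatrix_apply]
    rw [show τ i = f i from rfl, hf i]
  have hle : ∑ i, del N k j i (τ i) ≤ tperm (del N k j) :=
    Finset.le_sup' (f := fun τ : Equiv.Perm (Fin p) => ∑ i, del N k j i (τ i))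
      (Finset.mem_univ τ)
  have : tperm N = ∑ i, N i (σ i) := hσ
  rw [this, hsum]
  linarith [hτ ▸ hle]

/-- Let `A` be an (m+1)×(n+1) real matrix, `b ∈ ℝ^(m+1)`, `N = Aᵀ ⊙ A`, and
`c = Aᵀ ⊙ b`. If `(N ⊙ N⁻)_{ij} ≤ c_i - c_j` for all `i, j`, then every solution `X` of
`A ⊙ X = b` satisfies `X ≤ N⁻ ⊙ c` entrywise. -/
theorem stmt14 {m n : ℕ} (A : Matrix (Fin (m+1)) (Fin (n+1)) ℝ) (b : Fin (m+1) → ℝ)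
    (h : ∀ i j, tmul (tmul Aᵀ A) (pinv (tmul Aᵀ A)) i j ≤
      tmulVec Aᵀ b i - tmulVec Aᵀ b j) :
    ∀ X : Fin (n+1) → ℝ, (∀ i, tmulVec A X i = b i) →
      ∀ j, X j ≤ tmulVec (pinv (tmul Aᵀ A)) (tmulVec Aᵀ b) j := by
  intro X hX j
  set N : Matrix (Fin (n+1)) (Fin (n+1)) ℝ := tmul Aᵀ A with hN
  set c : Fin (n+1) → ℝ := tmulVec Aᵀ b with hc
  obtain ⟨k, hk⟩ := tperm_le_col N j
  -- pick l attaining N k j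
  obtain ⟨l, -, hl⟩ := Finset.exists_mem_eq_sup'
    (⟨0, Finset.mem_univ 0⟩ : (Finset.univ : Finset (Fin (m+1))).Nonempty)
    (fun t => Aᵀ k t + A t j)
  have hNkj : N k j = A l k + A l j := by
    rw [hN]; simp only [tmul]; rw [hl]; simp [Matrix.transpose_apply]
  -- c k ≥ A l k + b l
  have hck : A l k + b l ≤ c k := by
    have := Finset.le_sup' (f := fun t => Aᵀ k t + b t) (Finset.mem_univ l)
    simpa [hc, tmulVec, Matrix.transpose_apply] using this
  -- b l ≥ A l j + X j
  have hbl : A l j + X j ≤ b l := by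
    rw [← hX l]
    exact Finset.le_sup' (f := fun t => A l t + X t) (Finset.mem_univ j)
  -- conclude
  have hgoal : pinv N j k + c k ≤ tmulVec (pinv N) c j :=
    Finset.le_sup' (f := fun t => pinv N j t + c t) (Finset.mem_univ k)
  have hpinv : pinv N j k = tperm (del N k j) - tperm N := rfl
  have : X j ≤ pinv N j k + c k := by
    rw [hpinv]
    have h1 : tperm N - tperm (del N k j) ≤ N k j := by linarith
    rw [hNkj] at h1
    linarith
  linarith
end
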